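/- arXiv:2403.10161 — 11 statements merged into one kernel-verified Lean document; each statement's English description precedes it below -/
import Mathlib

section
/- Let R be a reduced ring with involution *. For x, y ∈ R and any positive integer n, xⁿy* = 0 if and only if xy* = 0. Consequently the generalized zero-divisor graph Γ'(R) coincides with the zero-divisor graph Γ*(R). -/
lemma sq_aux {R : Type*} [Ring R] [IsReduced R] (a b : R) (h : a ^ 2 * b = 0) :
    a * b = 0 := by
  have h1 : a * b * a = 0 := by
    apply IsReduced.eq_zero _ ⟨2, _⟩
    have : (a * b * a) ^ 2 = a * b * (a ^ 2 * b) * a := by noncomm_ring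
    rw [this, h, mul_zero, zero_mul]
  apply IsReduced.eq_zero _ ⟨2, _⟩
  have : (a * b) ^ 2 = (a * b * a) * b := by noncomm_ring
  rw [this, h1, zero_mul]

lemma pow_aux {R : Type*} [Ring R] [IsReduced R] :
    ∀ (n : ℕ) (a b : R), a ^ (n + 1) * b = 0 → a * b = 0 := by
  intro n
  induction n with
  | zero => intro a b h; simpa using h
  | succ n ih =>
    intro a b h
    have h2 : a ^ (n + 1) * (a * b) = 0 := by
      rw [← mul_assoc, ← pow_succ]; exact h
    have := ih a (a * b) h2
    exact sq_aux a b (by rw [sq, mul_assoc]; exact this)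

/-- In a reduced *-ring, `xⁿ y* = 0 ↔ x y* = 0`, hence Γ'(R) = Γ*(R). -/
theorem stmt_1 {R : Type*} [Ring R] [StarRing R] [IsReduced R] :
    (∀ (x y : R) (n : ℕ), 0 < n → (x ^ n * star y = 0 ↔ x * star y = 0)) ∧
    (∀ x y : R,
      (x ≠ 0 ∧ ∃ z : R, z ≠ 0 ∧ (x * z = 0 ∨ z * x = 0)) →
      (y ≠ 0 ∧ ∃ z : R, z ≠ 0 ∧ (y * z = 0 ∨ z * y = 0)) →
      x ≠ y →
      ((∃ n : ℕ, 0 < n ∧ (x ^ n * star y = 0 ∨ y ^ n * star x = 0)) ↔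
        (x * star y = 0 ∨ y * star x = 0))) := by
  have key : ∀ (x y : R) (n : ℕ), 0 < n → (x ^ n * star y = 0 ↔ x * star y = 0) := by
    intro x y n hn
    constructor
    · intro h
      obtain ⟨m, rfl⟩ := Nat.exists_eq_add_of_lt hn
      exact pow_aux m x (star y) (by rwa [Nat.zero_add] at h)
    · intro h
      obtain ⟨m, rfl⟩ := Nat.exists_eq_add_of_lt hn
      rw [Nat.zero_add, pow_succ, mul_assoc, h, mul_zero]
  refine ⟨key, fun x y _ _ _ => ?_⟩
  constructor
  · rintro ⟨n, hn, h | h⟩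
    · exact Or.inl ((key x y n hn).mp h)
    · exact Or.inr ((key y x n hn).mp h)
  · rintro (h | h)
    · exact ⟨1, one_pos, Or.inl (by simpa using h)⟩
    · exact ⟨1, one_pos, Or.inr (by simpa using h)⟩
end

section
/- Let R be a *-ring with unity and let e ∈ Z*(R) be a projection (e² = e = e*). Then for x ∈ Z*(R), e and x are adjacent in Γ'(R) if and only if xⁿ ∈ R(1−e) for some positive integer n. -/
lemma idem_pow {R : Type*} [Ring R] {e : R} (he : e * e = e) :
    ∀ n : ℕ, 0 < n → e ^ n = e := by
  intro n hn
  induction n with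
  | zero => exact absurd hn (by simp)
  | succ m ih =>
    rcases Nat.eq_zero_or_pos m with hm | hm
    · simp [hm]
    · rw [pow_succ, ih hm, he]

/-- For a projection `e` and `x` in `Z*(R)`, `e` and `x` are adjacent in Γ'(R) iff
`xⁿ ∈ R(1-e)` for some positive integer `n`. -/
theorem stmt_3 {R : Type*} [Ring R] [StarRing R] (e x : R)
    (he : e * e = e ∧ star e = e)
    (heZ : e ≠ 0 ∧ ∃ z : R, z ≠ 0 ∧ (e * z = 0 ∨ z * e = 0))
    (hxZ : x ≠ 0 ∧ ∃ z : R, z ≠ 0 ∧ (x * z = 0 ∨ z * x = 0))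
    (hne : x ≠ e) :
    (∃ n : ℕ, 0 < n ∧ (e ^ n * star x = 0 ∨ x ^ n * star e = 0)) ↔
      (∃ n : ℕ, 0 < n ∧ ∃ r : R, x ^ n = r * (1 - e)) := by
  obtain ⟨he2, hes⟩ := he
  constructor
  · rintro ⟨n, hn, h | h⟩
    · rw [idem_pow he2 n hn] at h
      have hxe : x * e = 0 := by
        have := congrArg star h
        rwa [star_mul, star_star, hes, star_zero] at this
      refine ⟨1, one_pos, x, ?_⟩
      rw [pow_one, mul_sub, mul_one, hxe, sub_zero]
    · rw [hes] at h
      refine ⟨n, hn, x ^ n, ?_⟩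
      rw [mul_sub, mul_one, h, sub_zero]
  · rintro ⟨n, hn, r, hr⟩
    refine ⟨n, hn, Or.inr ?_⟩
    rw [hes, hr, mul_assoc, sub_mul, one_mul, he2, sub_self, mul_zero]
end

section
/- Let R be a *-ring containing a nonzero nilpotent element. Then Γ'(R) is connected with diameter at most 2: any two distinct vertices in Z*(R) are joined by a path of length at most 2. -/
/-- A nonzero nilpotent element is a left zero-divisor. -/
lemma aux_nilp_zd {R : Type*} [Ring R] {a : R} (ha : a ≠ 0) :
    ∀ n : ℕ, a ^ n = 0 → ∃ z : R, z ≠ 0 ∧ a * z = 0 := by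
  intro n
  induction n with
  | zero => intro h; exact absurd (by rw [← mul_one a, show (1:R) = 0 by simpa using h, mul_zero]) ha
  | succ n ih =>
      intro h
      by_cases hz : a ^ n = 0
      · exact ih hz
      · exact ⟨a ^ n, hz, by rwa [← pow_succ']⟩

/-- A nonzero nilpotent element has a positive nilpotency exponent. -/
lemma aux_nilp_pos {R : Type*} [Ring R] {a : R} (ha : a ≠ 0) (h : IsNilpotent a) :
    ∃ n : ℕ, 0 < n ∧ a ^ n = 0 := by
  obtain ⟨n, hn⟩ := h
  rcases Nat.eq_zero_or_pos n with h0 | h0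
  · subst h0
    exact absurd (by rw [← mul_one a, show (1:R) = 0 by simpa using hn, mul_zero]) ha
  · exact ⟨n, h0, hn⟩

/-- If a *-ring contains a nonzero nilpotent element, then Γ'(R) is connected with
diameter at most 2: any two distinct vertices are adjacent or joined by a path of length 2. -/
theorem stmt_6 {R : Type*} [Ring R] [StarRing R]
    (hnil : ∃ a : R, a ≠ 0 ∧ IsNilpotent a)
    (x y : R)
    (hx : x ≠ 0 ∧ ∃ z : R, z ≠ 0 ∧ (x * z = 0 ∨ z * x = 0))
    (hy : y ≠ 0 ∧ ∃ z : R, z ≠ 0 ∧ (y * z = 0 ∨ z * y = 0))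
    (hne : x ≠ y) :
    (∃ n : ℕ, 0 < n ∧ (x ^ n * star y = 0 ∨ y ^ n * star x = 0)) ∨
    (∃ w : R, (w ≠ 0 ∧ ∃ z : R, z ≠ 0 ∧ (w * z = 0 ∨ z * w = 0)) ∧ w ≠ x ∧ w ≠ y ∧
      (∃ n : ℕ, 0 < n ∧ (x ^ n * star w = 0 ∨ w ^ n * star x = 0)) ∧
      (∃ n : ℕ, 0 < n ∧ (w ^ n * star y = 0 ∨ y ^ n * star w = 0))) := by
  obtain ⟨hx0, -⟩ := hx
  obtain ⟨hy0, -⟩ := hy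
  by_cases hxnil : IsNilpotent x
  · obtain ⟨n, hn, hxn⟩ := aux_nilp_pos hx0 hxnil
    exact Or.inl ⟨n, hn, Or.inl (by rw [hxn, zero_mul])⟩
  by_cases hynil : IsNilpotent y
  · obtain ⟨n, hn, hyn⟩ := aux_nilp_pos hy0 hynil
    exact Or.inl ⟨n, hn, Or.inr (by rw [hyn, zero_mul])⟩
  obtain ⟨a, ha0, hanil⟩ := hnil
  obtain ⟨m, hm, ham⟩ := aux_nilp_pos ha0 hanil
  obtain ⟨z, hz0, haz⟩ := aux_nilp_zd ha0 m ham
  refine Or.inr ⟨a, ⟨ha0, z, hz0, Or.inl haz⟩, ?_, ?_, ⟨m, hm, Or.inr (by rw [ham, zero_mul])⟩,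
    ⟨m, hm, Or.inl (by rw [ham, zero_mul])⟩⟩
  · rintro rfl; exact hxnil hanil
  · rintro rfl; exact hynil hanil
end

section
/- In the *-ring R = M₂(ℤ₂) of 2×2 matrices over ℤ₂ with transpose as involution, the graph Γ'(R) is connected with diameter 2 and girth 3. -/
/-!
`e₁₂` squares to zero, so it is adjacent to every other vertex of Γ'(M₂(ℤ₂)): the graph is
connected of diameter at most 2. The idempotents `e₁₁` and `p = !![1, 1; 0, 0]` equal all their
powers and neither kills the transpose of the other, so they are not adjacent and the diameter
is 2. The square-zero matrices `e₁₂`, `e₂₁` together with `e₁₁` form a triangle, so the girth is 3.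
-/

open Matrix

/-- The nonzero zero-divisors of `M₂(ℤ₂)`. -/
def ZstarM2 : Set (Matrix (Fin 2) (Fin 2) (ZMod 2)) :=
  {X | X ≠ 0 ∧ ∃ Y : Matrix (Fin 2) (Fin 2) (ZMod 2), Y ≠ 0 ∧ (X * Y = 0 ∨ Y * X = 0)}

/-- The generalized zero-divisor graph Γ'(M₂(ℤ₂)), with transpose as involution. -/
def gammaPM2 : SimpleGraph ZstarM2 where
  Adj X Y := X ≠ Y ∧ ∃ n : ℕ, 0 < n ∧
      ((X : Matrix (Fin 2) (Fin 2) (ZMod 2)) ^ n * (Y : Matrix (Fin 2) (Fin 2) (ZMod 2))ᵀ = 0 ∨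
       (Y : Matrix (Fin 2) (Fin 2) (ZMod 2)) ^ n * (X : Matrix (Fin 2) (Fin 2) (ZMod 2))ᵀ = 0)
  symm := by
    constructor
    rintro X Y ⟨hne, n, hn, h⟩
    exact ⟨hne.symm, n, hn, h.symm⟩
  loopless := by constructor; rintro X ⟨hne, -⟩; exact hne rfl

namespace SimpleGraph

variable {V : Type*} {G : SimpleGraph V}

lemma egirth_le_three_of_not_cliqueFree (h : ¬G.CliqueFree 3) : G.egirth ≤ 3 := by
  grw [((not_cliqueFree_iff_top_isContained 3).mp h).egirth_le, egirth_top (by simp)]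

open Classical in
lemma egirth_eq_three_of_adj {a b c : V} (hab : G.Adj a b) (hac : G.Adj a c) (hbc : G.Adj b c) :
    G.egirth = 3 :=
  le_antisymm (egirth_le_three_of_not_cliqueFree fun h ↦
    h {a, b, c} (is3Clique_triple_iff.mpr ⟨hab, hac, hbc⟩)) three_le_egirth

lemma ediam_eq_two_of_forall_adj {u a b : V} (hu : ∀ v, u ≠ v → G.Adj u v) (hab : a ≠ b)
    (hnadj : ¬G.Adj a b) : G.ediam = 2 := by
  have : Nontrivial V := ⟨a, b, hab⟩
  have hle : G.ediam ≤ 2 := by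
    grw [ediam_le_two_mul_eccent u, (eccent_le_one_iff u).mpr hu, mul_one]
  have hne_one : G.ediam ≠ 1 := fun h ↦ hnadj (by simp [ediam_eq_one.mp h, hab])
  have hgt : 1 < G.ediam := (Order.one_le_iff_ne_zero.mpr ediam_ne_zero).lt_of_ne' hne_one
  exact le_antisymm hle (Order.add_one_le_of_lt hgt)

end SimpleGraph

local notation "M₂" => Matrix (Fin 2) (Fin 2) (ZMod 2)

namespace ZstarM2

def e₁₂ : ZstarM2 := ⟨!![0, 1; 0, 0], by rw [ZstarM2, Set.mem_ofPred_eq]; decide⟩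
def e₂₁ : ZstarM2 := ⟨!![0, 0; 1, 0], by rw [ZstarM2, Set.mem_ofPred_eq]; decide⟩
def e₁₁ : ZstarM2 := ⟨!![1, 0; 0, 0], by rw [ZstarM2, Set.mem_ofPred_eq]; decide⟩
def p : ZstarM2 := ⟨!![1, 1; 0, 0], by rw [ZstarM2, Set.mem_ofPred_eq]; decide⟩

end ZstarM2

namespace gammaPM2

open ZstarM2

lemma adj_of_sq_eq_zero {X Y : ZstarM2} (hne : X ≠ Y) (hX : (X : M₂) ^ 2 = 0) :
    gammaPM2.Adj X Y :=
  ⟨hne, 2, two_pos, .inl (by rw [hX, zero_mul])⟩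

lemma not_adj_of_isIdempotentElem {X Y : ZstarM2} (hX : IsIdempotentElem (X : M₂))
    (hY : IsIdempotentElem (Y : M₂)) (hXY : (X : M₂) * (Y : M₂)ᵀ ≠ 0)
    (hYX : (Y : M₂) * (X : M₂)ᵀ ≠ 0) : ¬gammaPM2.Adj X Y := by
  rintro ⟨-, n, hn, h⟩
  obtain ⟨n, rfl⟩ := Nat.exists_eq_add_one.mpr hn
  rw [hX.pow_succ_eq, hY.pow_succ_eq] at h
  exact h.elim hXY hYX

lemma adj_e₁₂ {X : ZstarM2} (hX : e₁₂ ≠ X) : gammaPM2.Adj e₁₂ X :=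
  adj_of_sq_eq_zero hX (by decide)

lemma not_adj_e₁₁_p : ¬gammaPM2.Adj e₁₁ p :=
  not_adj_of_isIdempotentElem (by unfold IsIdempotentElem; decide)
    (by unfold IsIdempotentElem; decide) (by decide) (by decide)

end gammaPM2

open ZstarM2 gammaPM2

/-- Γ'(M₂(ℤ₂)) is connected, has diameter 2 and girth 3. -/
theorem stmt_8 :
    gammaPM2.Connected ∧ gammaPM2.ediam = 2 ∧ gammaPM2.egirth = 3 := by
  have hdiam : gammaPM2.ediam = 2 :=
    SimpleGraph.ediam_eq_two_of_forall_adj (fun _ ↦ adj_e₁₂) (by decide) not_adj_e₁₁_p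
  refine ⟨?_, hdiam, ?_⟩
  · have : Nonempty ZstarM2 := ⟨e₁₂⟩
    exact SimpleGraph.connected_of_ediam_ne_top (by simp [hdiam])
  · exact SimpleGraph.egirth_eq_three_of_adj (adj_e₁₂ (X := e₂₁) (by decide))
      (adj_e₁₂ (X := e₁₁) (by decide))
      (adj_of_sq_eq_zero (X := e₂₁) (Y := e₁₁) (by decide) (by decide))
end

section
/- Let F be a field and let A, B ∈ M₂(F) be singular matrices that are not nilpotent. Then for any positive integer n, AⁿBᵀ = 0 if and only if ABᵀ = 0, where Bᵀ is the transpose. Hence two non-nilpotent zero-divisors are adjacent in Γ'(M₂(F)) if and only if they are adjacent in Γ*(M₂(F)). -/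
open Matrix

private lemma sq_eq_trace_smul {F : Type*} [Field F] (A : Matrix (Fin 2) (Fin 2) F)
    (hdA : A.det = 0) : A ^ 2 = A.trace • A := by
  rw [Matrix.det_fin_two] at hdA
  rw [pow_two, Matrix.trace_fin_two]
  ext i j
  fin_cases i <;> fin_cases j <;>
    simp [Matrix.mul_apply, Fin.sum_univ_succ] <;>
    first
      | ring1
      | linear_combination hdA
      | linear_combination (-1 : F) * hdA

private lemma trace_ne_zero {F : Type*} [Field F] (A : Matrix (Fin 2) (Fin 2) F)
    (hdA : A.det = 0) (hnA : ¬ IsNilpotent A) : A.trace ≠ 0 := by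
  intro h
  exact hnA ⟨2, by rw [sq_eq_trace_smul A hdA, h, zero_smul]⟩

private lemma pow_eq_trace_pow_smul {F : Type*} [Field F] (A : Matrix (Fin 2) (Fin 2) F)
    (hdA : A.det = 0) : ∀ n : ℕ, 0 < n → A ^ n = A.trace ^ (n - 1) • A := by
  intro n hn
  induction n with
  | zero => omega
  | succ m ih =>
    rcases Nat.eq_zero_or_pos m with hm | hm
    · subst hm; simp
    · have hm1 : m + 1 - 1 = (m - 1) + 1 := by omega
      rw [pow_succ, ih hm, smul_mul_assoc, ← pow_two, sq_eq_trace_smul A hdA,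
        smul_smul, ← pow_succ, hm1]

private lemma key_iff {F : Type*} [Field F] (A B : Matrix (Fin 2) (Fin 2) F)
    (hdA : A.det = 0) (hnA : ¬ IsNilpotent A) :
    ∀ n : ℕ, 0 < n → (A ^ n * Bᵀ = 0 ↔ A * Bᵀ = 0) := by
  intro n hn
  rw [pow_eq_trace_pow_smul A hdA n hn, smul_mul_assoc, smul_eq_zero]
  have := pow_ne_zero (n - 1) (trace_ne_zero A hdA hnA)
  tauto

/-- For singular non-nilpotent `A, B ∈ M₂(F)`: `Aⁿ Bᵀ = 0 ↔ A Bᵀ = 0`, hence two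
non-nilpotent zero-divisors are adjacent in Γ'(M₂(F)) iff they are adjacent in Γ*(M₂(F)). -/
theorem stmt_10 {F : Type*} [Field F] (A B : Matrix (Fin 2) (Fin 2) F)
    (hdA : A.det = 0) (hdB : B.det = 0)
    (hnA : ¬ IsNilpotent A) (hnB : ¬ IsNilpotent B) :
    (∀ n : ℕ, 0 < n → (A ^ n * Bᵀ = 0 ↔ A * Bᵀ = 0)) ∧
    (A ≠ B →
      ((∃ n : ℕ, 0 < n ∧ (A ^ n * Bᵀ = 0 ∨ B ^ n * Aᵀ = 0)) ↔
        (A * Bᵀ = 0 ∨ B * Aᵀ = 0))) := by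
  refine ⟨key_iff A B hdA hnA, fun _ => ⟨?_, ?_⟩⟩
  · rintro ⟨n, hn, h | h⟩
    · exact Or.inl ((key_iff A B hdA hnA n hn).mp h)
    · exact Or.inr ((key_iff B A hdB hnB n hn).mp h)
  · rintro (h | h)
    · exact ⟨1, one_pos, Or.inl (by simpa using h)⟩
    · exact ⟨1, one_pos, Or.inr (by simpa using h)⟩
end

section
/- Let R be a *-ring such that every vertex of Γ'(R) has finite degree (each nonzero zero-divisor satisfies the adjacency relation with only finitely many other elements). If Z*(R) is nonempty, then R is a finite ring. -/
private theorem key_11 {R : Type*} [Ring R] [StarRing R]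
    (hfin : ∀ x : R, (x ≠ 0 ∧ ∃ z : R, z ≠ 0 ∧ (x * z = 0 ∨ z * x = 0)) →
      {y : R | (y ≠ 0 ∧ ∃ z : R, z ≠ 0 ∧ (y * z = 0 ∨ z * y = 0)) ∧ y ≠ x ∧
        ∃ n : ℕ, 0 < n ∧ (x ^ n * star y = 0 ∨ y ^ n * star x = 0)}.Finite)
    {a b : R} (ha : a ≠ 0) (hb : b ≠ 0) (hab : a * b = 0) : Finite R := by
  have hsa : (star a : R) ≠ 0 := fun h => ha (by simpa using congrArg star h)
  have hsb : (star b : R) ≠ 0 := fun h => hb (by simpa using congrArg star h)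
  have hDa := hfin a ⟨ha, b, hb, Or.inl hab⟩
  have hDb := hfin b ⟨hb, a, ha, Or.inr hab⟩
  -- The image b*R is finite
  have hT : (Set.range (fun r : R => b * r)).Finite := by
    apply Set.Finite.subset (((hDa.insert a).image star).insert 0)
    rintro y ⟨r, rfl⟩
    by_cases h0 : b * r = 0
    · exact Set.mem_insert_iff.mpr (Or.inl h0)
    · refine Set.mem_insert_iff.mpr (Or.inr ⟨star (b * r), ?_, by simp⟩)
      by_cases hya : star (b * r) = a
      · exact Set.mem_insert_iff.mpr (Or.inl hya)
      · refine Set.mem_insert_iff.mpr (Or.inr ?_)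
        refine ⟨⟨fun h => h0 (by simpa using congrArg star h),
          star a, hsa, Or.inl ?_⟩, hya, 1, one_pos, Or.inl ?_⟩
        · rw [← star_mul, ← mul_assoc, hab, zero_mul, star_zero]
        · rw [pow_one, star_star, ← mul_assoc, hab, zero_mul]
  -- The annihilator {w | b * w = 0} is finite
  have hAnn : {w : R | b * w = 0}.Finite := by
    apply Set.Finite.subset (((hDb.insert b).image star).insert 0)
    intro w hw
    by_cases h0 : w = 0
    · exact Set.mem_insert_iff.mpr (Or.inl h0)
    · refine Set.mem_insert_iff.mpr (Or.inr ⟨star w, ?_, by simp⟩)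
      by_cases hwb : star w = b
      · exact Set.mem_insert_iff.mpr (Or.inl hwb)
      · refine Set.mem_insert_iff.mpr (Or.inr ?_)
        refine ⟨⟨fun h => h0 (by simpa using congrArg star h),
          star b, hsb, Or.inl ?_⟩, hwb, 1, one_pos, Or.inl ?_⟩
        · rw [← star_mul, hw, star_zero]
        · rw [pow_one, star_star, hw]
  -- R is covered by finitely many fibers, each a translate of the annihilator
  have huniv : (Set.univ : Set R).Finite := by
    have hsub : (Set.univ : Set R) ⊆
        ⋃ y ∈ Set.range (fun r : R => b * r), {r : R | b * r = y} := by
      intro r _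
      exact Set.mem_biUnion ⟨r, rfl⟩ rfl
    apply Set.Finite.subset (Set.Finite.biUnion hT ?_) hsub
    rintro y ⟨r0, rfl⟩
    apply Set.Finite.subset (hAnn.image (fun w => r0 + w))
    intro r hr
    refine ⟨r - r0, ?_, by simp⟩
    simp only [Set.mem_setOf_eq] at hr ⊢
    rw [mul_sub, hr, sub_self]
  exact Set.finite_univ_iff.mp huniv

/-- If every vertex of Γ'(R) has finite degree and Γ'(R) has a vertex, then `R` is finite. -/
theorem stmt_11 {R : Type*} [Ring R] [StarRing R]
    (hfin : ∀ x : R, (x ≠ 0 ∧ ∃ z : R, z ≠ 0 ∧ (x * z = 0 ∨ z * x = 0)) →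
      {y : R | (y ≠ 0 ∧ ∃ z : R, z ≠ 0 ∧ (y * z = 0 ∨ z * y = 0)) ∧ y ≠ x ∧
        ∃ n : ℕ, 0 < n ∧ (x ^ n * star y = 0 ∨ y ^ n * star x = 0)}.Finite)
    (hne : ∃ x : R, x ≠ 0 ∧ ∃ z : R, z ≠ 0 ∧ (x * z = 0 ∨ z * x = 0)) :
    Finite R := by
  obtain ⟨x, hx, z, hz, hxz | hzx⟩ := hne
  · exact key_11 hfin hx hz hxz
  · exact key_11 hfin hz hx hzx
end

section
/- Let R be a *-ring with unity and let a ∈ Z*(R) be adjacent in Γ'(R) to every other element of Z*(R). Then a is nilpotent or a is a projection (a² = a = a*). -/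
/-- If `a ∈ Z*(R)` is adjacent in Γ'(R) to every other element of `Z*(R)`, then `a` is
nilpotent or `a` is a projection. -/
theorem stmt_12 {R : Type*} [Ring R] [StarRing R] (a : R)
    (haZ : a ≠ 0 ∧ ∃ z : R, z ≠ 0 ∧ (a * z = 0 ∨ z * a = 0))
    (hadj : ∀ x : R, (x ≠ 0 ∧ ∃ z : R, z ≠ 0 ∧ (x * z = 0 ∨ z * x = 0)) → x ≠ a →
      ∃ n : ℕ, 0 < n ∧ (a ^ n * star x = 0 ∨ x ^ n * star a = 0)) :
    IsNilpotent a ∨ (a * a = a ∧ star a = a) := by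
  obtain ⟨ha0, z, hz0, hz⟩ := haZ
  by_cases hsa : star a = a
  · by_cases hsq : a * a = a
    · exact Or.inr ⟨hsq, hsa⟩
    · left
      by_cases h0 : a * a = 0
      · exact ⟨2, by rw [pow_two]; exact h0⟩
      · have hZ : (a * a ≠ 0 ∧ ∃ w : R, w ≠ 0 ∧ (a * a * w = 0 ∨ w * (a * a) = 0)) := by
          refine ⟨h0, z, hz0, ?_⟩
          rcases hz with h | h
          · exact Or.inl (by rw [mul_assoc, h, mul_zero])
          · exact Or.inr (by rw [← mul_assoc, h, zero_mul])
        obtain ⟨n, hn, h | h⟩ := hadj (a * a) hZ hsq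
        · refine ⟨n + 2, ?_⟩
          rw [star_mul, hsa] at h
          rw [pow_add, pow_two]; exact h
        · refine ⟨2 * n + 1, ?_⟩
          rw [hsa, ← pow_two, ← pow_mul] at h
          rw [pow_succ, h]
  · left
    have hsZ : (star a ≠ 0 ∧ ∃ w : R, w ≠ 0 ∧ (star a * w = 0 ∨ w * star a = 0)) := by
      refine ⟨by simpa using ha0, star z, by simpa using hz0, ?_⟩
      rcases hz with h | h
      · exact Or.inr (by rw [← star_mul, h, star_zero])
      · exact Or.inl (by rw [← star_mul, h, star_zero])
    obtain ⟨n, hn, h | h⟩ := hadj (star a) hsZ hsa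
    · rw [star_star] at h
      exact ⟨n + 1, by rw [pow_succ, h]⟩
    · have h' : (star a) ^ (n + 1) = 0 := by rw [pow_succ, h]
      refine ⟨n + 1, ?_⟩
      have := congrArg star h'
      rwa [star_pow, star_star, star_zero] at this
end

section
/- Let R be a *-ring with unity and let e ∈ Z*(R) be a projection adjacent in Γ'(R) to all other vertices of Z*(R). Then for every nontrivial projection f ≠ e (f ∉ {0,1}), ef = 0 = fe, i.e., e is orthogonal to every other nontrivial projection. -/
/-- If a projection `e ∈ Z*(R)` is adjacent in Γ'(R) to all other vertices, then `e` is
orthogonal to every other nontrivial projection. -/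
theorem stmt_13 {R : Type*} [Ring R] [StarRing R] (e : R)
    (he : e * e = e ∧ star e = e)
    (heZ : e ≠ 0 ∧ ∃ z : R, z ≠ 0 ∧ (e * z = 0 ∨ z * e = 0))
    (hadj : ∀ x : R, (x ≠ 0 ∧ ∃ z : R, z ≠ 0 ∧ (x * z = 0 ∨ z * x = 0)) → x ≠ e →
      ∃ n : ℕ, 0 < n ∧ (e ^ n * star x = 0 ∨ x ^ n * star e = 0)) :
    ∀ f : R, f * f = f → star f = f → f ≠ 0 → f ≠ 1 → f ≠ e →
      e * f = 0 ∧ f * e = 0 := by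
  intro f hf hsf hf0 hf1 hfe
  have hfZ : f ≠ 0 ∧ ∃ z : R, z ≠ 0 ∧ (f * z = 0 ∨ z * f = 0) := by
    refine ⟨hf0, 1 - f, ?_, Or.inl ?_⟩
    · intro h
      apply hf1
      have : (1 : R) - f + f = 0 + f := by rw [h]
      simpa using this.symm
    · rw [mul_sub, hf, mul_one, sub_self]
  obtain ⟨n, hn, hor⟩ := hadj f hfZ hfe
  rw [idem_pow he.1 n hn, idem_pow hf n hn, hsf, he.2] at hor
  rcases hor with h | h
  · refine ⟨h, ?_⟩
    have : star (f * e) = 0 := by rw [star_mul, he.2, hsf, h]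
    calc f * e = star (star (f * e)) := (star_star _).symm
    _ = 0 := by rw [this, star_zero]
  · refine ⟨?_, h⟩
    have : star (e * f) = 0 := by rw [star_mul, he.2, hsf, h]
    calc e * f = star (star (e * f)) := (star_star _).symm
    _ = 0 := by rw [this, star_zero]
end

section
/- Let R be a ring with involution * in which every element of R commutes with every idempotent (abelian ring), with unity, such that every pair of distinct vertices of Γ'(R) is adjacent (Γ'(R) is complete). Then either R ≅ ℤ₂ × ℤ₂ or every element of Z*(R) is nilpotent. -/
section Aux

variable {R : Type*} [Ring R] [StarRing R]

/-- `x` is a nonzero zero-divisor. -/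
def ZDt (x : R) : Prop := x ≠ 0 ∧ ∃ z : R, z ≠ 0 ∧ (x * z = 0 ∨ z * x = 0)

lemma zdt_star {x : R} (h : ZDt x) : ZDt (star x) := by
  obtain ⟨hx, z, hz, hzz⟩ := h
  refine ⟨fun h0 => hx (by simpa using congrArg star h0), star z,
    fun h0 => hz (by simpa using congrArg star h0), ?_⟩
  rcases hzz with h1 | h1
  · exact Or.inr (by rw [← star_mul, h1, star_zero])
  · exact Or.inl (by rw [← star_mul, h1, star_zero])

lemma nn_star
    (hcomplete : ∀ x y : R, ZDt x → ZDt y → x ≠ y →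
      ∃ n : ℕ, 0 < n ∧ (x ^ n * star y = 0 ∨ y ^ n * star x = 0))
    {x : R} (hzd : ZDt x) (hnn : ¬ IsNilpotent x) : star x = x := by
  by_contra hne
  obtain ⟨n, hn, hcase⟩ := hcomplete x (star x) hzd (zdt_star hzd) (fun h => hne h.symm)
  rcases hcase with h | h
  · rw [star_star] at h
    exact hnn ⟨n + 1, by rw [pow_succ]; exact h⟩
  · have h2 : (star x) ^ (n + 1) = 0 := by rw [pow_succ]; exact h
    have h3 : x ^ (n + 1) = 0 := by
      have := congrArg star h2
      rwa [star_pow, star_star, star_zero] at this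
    exact hnn ⟨n + 1, h3⟩

lemma nn_idem
    (hcomplete : ∀ x y : R, ZDt x → ZDt y → x ≠ y →
      ∃ n : ℕ, 0 < n ∧ (x ^ n * star y = 0 ∨ y ^ n * star x = 0))
    {x : R} (hzd : ZDt x) (hnn : ¬ IsNilpotent x) (hs : star x = x) : x * x = x := by
  by_contra hne
  have hzd2 : ZDt (x * x) := by
    obtain ⟨hx, z, hz, hzz⟩ := hzd
    refine ⟨fun h0 => hnn ⟨2, by rwa [pow_two]⟩, z, hz, ?_⟩
    rcases hzz with h1 | h1
    · exact Or.inl (by rw [mul_assoc, h1, mul_zero])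
    · exact Or.inr (by rw [← mul_assoc, h1, zero_mul])
  obtain ⟨n, hn, hcase⟩ := hcomplete x (x * x) hzd hzd2 (fun h => hne h.symm)
  rcases hcase with h | h
  · rw [star_mul, hs] at h
    exact hnn ⟨n + 2, by rw [pow_add, pow_two, ← mul_assoc, mul_assoc]; exact h⟩
  · rw [hs] at h
    refine hnn ⟨2 * n + 1, ?_⟩
    rw [pow_succ, pow_mul, pow_two]
    exact h

lemma no_sq
    (hcomplete : ∀ x y : R, ZDt x → ZDt y → x ≠ y →
      ∃ n : ℕ, 0 < n ∧ (x ^ n * star y = 0 ∨ y ^ n * star x = 0))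
    {g c : R} (hg : g * g = g) (hg0 : g ≠ 0)
    (hc0 : c ≠ 0) (hcc : c * c = 0) (hgc : g * c = 0) (hcg : c * g = 0) : False := by
  set w := g + c with hw
  have hww : w * w = g := by
    rw [hw, add_mul, mul_add, mul_add, hg, hgc, hcg, hcc, add_zero, add_zero, add_zero]
  have hgw : g * w = g := by rw [hw, mul_add, hg, hgc, add_zero]
  have hpow : ∀ n, w ^ (n + 2) = g := by
    intro n
    induction n with
    | zero => rw [pow_two]; exact hww
    | succ k ih =>
      have : k + 1 + 2 = (k + 2) + 1 := by omega
      rw [this, pow_succ, ih]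
      rw [hw, mul_add, hg, hgc, add_zero]
  have hw0 : w ≠ 0 := fun h => hg0 (by rw [← hww, h, mul_zero])
  have hnn : ¬ IsNilpotent w := by
    rintro ⟨n, hn⟩
    match n with
    | 0 =>
      rw [pow_zero] at hn
      exact hg0 (by rw [← mul_one g, hn, mul_zero])
    | 1 => exact hw0 (by rwa [pow_one] at hn)
    | (m + 2) => exact hg0 (by rw [← hpow m]; exact hn)
  have hwc : w * c = 0 := by rw [hw, add_mul, hgc, hcc, add_zero]
  have hzd : ZDt w := ⟨hw0, c, hc0, Or.inl hwc⟩
  have h1 := nn_star hcomplete hzd hnn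
  have h2 := nn_idem hcomplete hzd hnn h1
  have h3 : g + c = g := by
    calc g + c = w := hw.symm
    _ = w * w := h2.symm
    _ = g := hww
  exact hc0 (add_eq_left.mp h3)

lemma key
    (hcomplete : ∀ x y : R, ZDt x → ZDt y → x ≠ y →
      ∃ n : ℕ, 0 < n ∧ (x ^ n * star y = 0 ∨ y ^ n * star x = 0))
    (habelian : ∀ e : R, e * e = e → ∀ r : R, e * r = r * e)
    {g : R} (hg : g * g = g) (hgs : star g = g) (hg0 : g ≠ 0) (hg1 : 1 - g ≠ 0) :
    ∀ r : R, g * r = 0 ∨ g * r = g := by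
  classical
  intro r
  by_contra hcon
  push_neg at hcon
  obtain ⟨h0, hne⟩ := hcon
  have hc : ∀ s : R, g * s = s * g := habelian g hg
  have h1 : (1 : R) ≠ 0 := fun h => hg0 (by rw [← mul_one g, h, mul_zero])
  have hgpow : ∀ n, g ^ (n + 1) = g := by
    intro n
    induction n with
    | zero => exact pow_one g
    | succ k ih => rw [pow_succ, ih, hg]
  have hcomm : Commute g r := hc r
  have hgr_pow : ∀ n, (g * r) ^ (n + 1) = g * r ^ (n + 1) := by
    intro n
    rw [hcomm.mul_pow, hgpow]
  have hzdg : ZDt g := ⟨hg0, 1 - g, hg1, Or.inl (by rw [mul_sub, mul_one, hg, sub_self])⟩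
  have hzdgr : ZDt (g * r) :=
    ⟨h0, 1 - g, hg1, Or.inr (by rw [sub_mul, one_mul, ← mul_assoc, hg, sub_self])⟩
  obtain ⟨n, hn, hcase⟩ := hcomplete g (g * r) hzdg hzdgr (fun h => hne h.symm)
  rcases hcase with h | h
  · rw [star_mul, hgs] at h
    obtain ⟨m, rfl⟩ : ∃ m, n = m + 1 := ⟨n - 1, by omega⟩
    rw [hgpow m] at h
    have h' : g * star r = 0 := by
      have heq : g * (star r * g) = g * star r := by
        rw [← hc (star r), ← mul_assoc, hg]
      rwa [heq] at h
    have h'' : r * g = 0 := by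
      have := congrArg star h'
      rwa [star_mul, star_star, hgs, star_zero] at this
    exact h0 (by rw [hc r]; exact h'')
  · rw [hgs] at h
    obtain ⟨m, rfl⟩ : ∃ m, n = m + 1 := ⟨n - 1, by omega⟩
    have hnil : (g * r) ^ (m + 1) = 0 := by
      rw [hgr_pow] at h ⊢
      rwa [mul_assoc, ← hc (r ^ (m + 1)), ← mul_assoc, hg] at h
    have hex : ∃ kk, (g * r) ^ kk = 0 := ⟨m + 1, hnil⟩
    have hk0 : (g * r) ^ (Nat.find hex) = 0 := Nat.find_spec hex
    have hkne0 : Nat.find hex ≠ 0 := by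
      intro h'
      rw [h', pow_zero] at hk0
      exact h1 hk0
    have hkne1 : Nat.find hex ≠ 1 := by
      intro h'
      rw [h', pow_one] at hk0
      exact h0 hk0
    obtain ⟨j, hj⟩ : ∃ j, Nat.find hex = j + 2 := by
      refine ⟨Nat.find hex - 2, ?_⟩
      omega
    have hcm1 : (g * r) ^ (j + 1) ≠ 0 := Nat.find_min hex (by omega)
    refine no_sq hcomplete (g := 1 - g) (c := (g * r) ^ (j + 1)) ?_ hg1 hcm1 ?_ ?_ ?_
    · rw [sub_mul, one_mul, mul_sub, mul_one, hg, sub_self, sub_zero]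
    · rw [← pow_add]
      have hsum : (j + 1) + (j + 1) = (j + 2) + j := by omega
      rw [hsum, pow_add, ← hj, hk0, zero_mul]
    · rw [sub_mul, one_mul, hgr_pow, ← mul_assoc, hg, ← hgr_pow, sub_self]
    · rw [mul_sub, mul_one, hgr_pow, mul_assoc, ← hc (r ^ (j + 1)), ← mul_assoc, hg,
        ← hgr_pow, sub_self]

end Aux

/-- If `R` is an abelian *-ring with unity and Γ'(R) is complete, then either
`R ≅ ℤ₂ × ℤ₂` or every element of `Z*(R)` is nilpotent. -/
theorem stmt_14 {R : Type*} [Ring R] [StarRing R]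
    (habelian : ∀ e : R, e * e = e → ∀ r : R, e * r = r * e)
    (hcomplete : ∀ x y : R,
      (x ≠ 0 ∧ ∃ z : R, z ≠ 0 ∧ (x * z = 0 ∨ z * x = 0)) →
      (y ≠ 0 ∧ ∃ z : R, z ≠ 0 ∧ (y * z = 0 ∨ z * y = 0)) →
      x ≠ y → ∃ n : ℕ, 0 < n ∧ (x ^ n * star y = 0 ∨ y ^ n * star x = 0)) :
    Nonempty (R ≃+* (ZMod 2 × ZMod 2)) ∨
      ∀ x : R, (x ≠ 0 ∧ ∃ z : R, z ≠ 0 ∧ (x * z = 0 ∨ z * x = 0)) → IsNilpotent x := by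
  classical
  by_cases hnil : ∀ x : R, (x ≠ 0 ∧ ∃ z : R, z ≠ 0 ∧ (x * z = 0 ∨ z * x = 0)) → IsNilpotent x
  · exact Or.inr hnil
  left
  push_neg at hnil
  obtain ⟨a, hazd, hann⟩ := hnil
  have hC : ∀ x y : R, ZDt x → ZDt y → x ≠ y →
      ∃ n : ℕ, 0 < n ∧ (x ^ n * star y = 0 ∨ y ^ n * star x = 0) := hcomplete
  have hzda : ZDt a := hazd
  have hs : star a = a := nn_star hC hzda hann
  have hg : a * a = a := nn_idem hC hzda hann hs
  have ha0 : a ≠ 0 := hzda.1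
  have hf0 : (1 : R) - a ≠ 0 := by
    intro h
    have ha1 : (1 : R) = a := sub_eq_zero.mp h
    obtain ⟨_, z, hz, hzz⟩ := hzda
    rcases hzz with h1 | h1 <;> rw [← ha1] at h1 <;>
      first
        | exact hz (by rwa [one_mul] at h1)
        | exact hz (by rwa [mul_one] at h1)
  have claim_e : ∀ r : R, a * r = 0 ∨ a * r = a := key hC habelian hg hs ha0 hf0
  have hff : (1 - a) * (1 - a) = 1 - a := by
    rw [sub_mul, one_mul, mul_sub, mul_one, hg, sub_self, sub_zero]
  have hfs : star (1 - a) = 1 - a := by rw [star_sub, star_one, hs]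
  have h1mf : (1 : R) - (1 - a) ≠ 0 := by rwa [sub_sub_cancel]
  have claim_f : ∀ r : R, (1 - a) * r = 0 ∨ (1 - a) * r = 1 - a :=
    key hC habelian hff hfs hf0 h1mf
  -- characteristic 2 facts
  have hee : a + a = 0 := by
    rcases claim_e (1 + 1) with h | h
    · rwa [mul_add, mul_one] at h
    · rw [mul_add, mul_one] at h
      exact absurd (add_left_cancel (show a + a = a + 0 by rw [add_zero]; exact h)) ha0
  have hfffe : (1 - a) + (1 - a) = 0 := by
    rcases claim_f (1 + 1) with h | h
    · rwa [mul_add, mul_one] at h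
    · rw [mul_add, mul_one] at h
      exact absurd (add_left_cancel
        (show (1 - a) + (1 - a) = (1 - a) + 0 by rw [add_zero]; exact h)) hf0
  have hdecomp : ∀ r : R, a * r + (1 - a) * r = r := by
    intro r
    rw [sub_mul, one_mul]
    abel
  have haf : a * (1 - a) = 0 := by rw [mul_sub, mul_one, hg, sub_self]
  have hfa : (1 - a) * a = 0 := by rw [sub_mul, one_mul, hg, sub_self]
  have hone : (1 : ZMod 2) ≠ 0 := by decide
  refine ⟨{
    toFun := fun r => (if a * r = 0 then 0 else 1, if (1 - a) * r = 0 then 0 else 1)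
    invFun := fun p => (if p.1 = 0 then 0 else a) + (if p.2 = 0 then 0 else 1 - a)
    left_inv := ?_
    right_inv := ?_
    map_mul' := ?_
    map_add' := ?_ }⟩
  · intro r
    rcases claim_e r with h1 | h1 <;> rcases claim_f r with h2 | h2 <;>
      (have hr' := (hdecomp r).symm
       rw [h1, h2] at hr'
       conv_rhs => rw [hr'])
    all_goals simp [h1, h2, ha0, hf0]
  · rintro ⟨x, y⟩
    have hz2 : ∀ u : ZMod 2, u = 0 ∨ u = 1 := by decide
    rcases hz2 x with rfl | rfl <;> rcases hz2 y with rfl | rfl <;>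
      simp only [if_pos rfl, if_neg hone] <;>
      simp [hg, hff, haf, hfa, ha0, hf0, mul_add, hone]
  · intro r s
    have he2 : a * (r * s) = (a * r) * s := by rw [mul_assoc]
    have hf2 : (1 - a) * (r * s) = ((1 - a) * r) * s := by rw [mul_assoc]
    refine Prod.ext ?_ ?_
    · show (if a * (r * s) = 0 then (0 : ZMod 2) else 1) =
        (if a * r = 0 then (0 : ZMod 2) else 1) * (if a * s = 0 then 0 else 1)
      rcases claim_e r with h1 | h1 <;> rcases claim_e s with h2 | h2 <;>
        rw [he2, h1] <;> simp [h2, ha0, hone]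
    · show (if (1 - a) * (r * s) = 0 then (0 : ZMod 2) else 1) =
        (if (1 - a) * r = 0 then (0 : ZMod 2) else 1) * (if (1 - a) * s = 0 then 0 else 1)
      rcases claim_f r with h1 | h1 <;> rcases claim_f s with h2 | h2 <;>
        rw [hf2, h1] <;> simp [h2, hf0, hone]
  · intro r s
    refine Prod.ext ?_ ?_
    · show (if a * (r + s) = 0 then (0 : ZMod 2) else 1) =
        (if a * r = 0 then (0 : ZMod 2) else 1) + (if a * s = 0 then 0 else 1)
      rcases claim_e r with h1 | h1 <;> rcases claim_e s with h2 | h2 <;>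
        rw [mul_add, h1, h2] <;> simp [ha0, hee, hone] <;> decide
    · show (if (1 - a) * (r + s) = 0 then (0 : ZMod 2) else 1) =
        (if (1 - a) * r = 0 then (0 : ZMod 2) else 1) + (if (1 - a) * s = 0 then 0 else 1)
      rcases claim_f r with h1 | h1 <;> rcases claim_f s with h2 | h2 <;>
        rw [mul_add, h1, h2] <;> simp [hf0, hfffe, hone] <;> decide
end

section
/- Let R be a *-ring with unity such that Γ'(R) is a star graph with center e satisfying e² = 0. Then R has no idempotents other than 0 and 1. -/
/-- If Γ'(R) is a star graph with center `e` and `e² = 0`, then `R` has no nontrivial idempotents. -/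
theorem stmt_17 {R : Type*} [Ring R] [StarRing R] (e : R)
    (heZ : e ≠ 0 ∧ ∃ z : R, z ≠ 0 ∧ (e * z = 0 ∨ z * e = 0))
    (hcenter : ∀ x : R, (x ≠ 0 ∧ ∃ z : R, z ≠ 0 ∧ (x * z = 0 ∨ z * x = 0)) → x ≠ e →
      ∃ n : ℕ, 0 < n ∧ (e ^ n * star x = 0 ∨ x ^ n * star e = 0))
    (hstar : ∀ x y : R,
      (x ≠ 0 ∧ ∃ z : R, z ≠ 0 ∧ (x * z = 0 ∨ z * x = 0)) →
      (y ≠ 0 ∧ ∃ z : R, z ≠ 0 ∧ (y * z = 0 ∨ z * y = 0)) →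
      x ≠ e → y ≠ e → x ≠ y →
      ¬ ∃ n : ℕ, 0 < n ∧ (x ^ n * star y = 0 ∨ y ^ n * star x = 0))
    (he2 : e * e = 0) :
    ∀ x : R, x * x = x → x = 0 ∨ x = 1 := by
  intro x hx
  by_contra hcon
  push_neg at hcon
  obtain ⟨hx0, hx1⟩ := hcon
  have he0 : e ≠ 0 := heZ.1
  have hb0 : (1 : R) - x ≠ 0 := fun h => hx1 (sub_eq_zero.mp h).symm
  have hab : x * (1 - x) = 0 := by rw [mul_sub, mul_one, hx, sub_self]
  have hba : (1 - x) * x = 0 := by rw [sub_mul, one_mul, hx, sub_self]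
  have hbidem : ((1 : R) - x) * (1 - x) = 1 - x := by
    rw [show ((1:R)-x)*(1-x) = 1 - x - (x - x*x) from by noncomm_ring, hx, sub_self, sub_zero]
  have hae : x ≠ e := fun h => hx0 (by rw [← hx, h, he2])
  have hbe : (1 : R) - x ≠ e := fun h => hb0 (by rw [← hbidem, h, he2])
  have hsa0 : star x ≠ 0 := fun h => hx0 (star_eq_zero.mp h)
  have hVa : x ≠ 0 ∧ ∃ z : R, z ≠ 0 ∧ (x * z = 0 ∨ z * x = 0) :=
    ⟨hx0, 1 - x, hb0, Or.inl hab⟩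
  have hVb : (1 : R) - x ≠ 0 ∧ ∃ z : R, z ≠ 0 ∧ ((1 - x) * z = 0 ∨ z * (1 - x) = 0) :=
    ⟨hb0, x, hx0, Or.inl hba⟩
  by_cases hse : star e = e
  · by_cases hsx : star x = 1 - x
    · by_cases hex0 : e * x = 0
      · -- v = (1-x) + e, pair with (1-x)
        have hvx : ((1 - x) + e) * x = 0 := by rw [add_mul, hba, hex0, add_zero]
        have hv0 : (1 : R) - x + e ≠ 0 := by
          intro h
          have h1 : (1 : R) - x = -e := eq_neg_of_add_eq_zero_left h
          exact hb0 (by rw [← hbidem, h1, neg_mul_neg, he2])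
        have hve : (1 : R) - x + e ≠ e := by
          intro h; exact hb0 (add_eq_right.mp h)
        have hbv : (1 : R) - x ≠ (1 - x) + e := by
          intro h; exact he0 (left_eq_add.mp h)
        have hsb_eq : star ((1 : R) - x) = x := by rw [star_sub, star_one, hsx, sub_sub_cancel]
        exact hstar (1 - x) ((1 - x) + e) hVb ⟨hv0, x, hx0, Or.inl hvx⟩ hbe hve hbv
          ⟨1, one_pos, Or.inr (by rw [pow_one, hsb_eq, hvx])⟩
      · by_cases hexe : e * x = e
        · -- v = x + e, pair with x
          have hvb : (x + e) * (1 - x) = 0 := by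
            rw [add_mul, hab, mul_sub, mul_one, hexe, sub_self, add_zero]
          have hv0 : x + e ≠ 0 := by
            intro h
            have h1 : x = -e := eq_neg_of_add_eq_zero_left h
            exact hx0 (by rw [← hx, h1, neg_mul_neg, he2])
          have hve : x + e ≠ e := by
            intro h; exact hx0 (add_eq_right.mp h)
          have hav : x ≠ x + e := by
            intro h; exact he0 (left_eq_add.mp h)
          exact hstar x (x + e) hVa ⟨hv0, 1 - x, hb0, Or.inl hvb⟩ hae hve hav
            ⟨1, one_pos, Or.inr (by rw [pow_one, hsx, hvb])⟩
        · -- v = e * x, pair with x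
          have hvb : (e * x) * (1 - x) = 0 := by rw [mul_assoc, hab, mul_zero]
          have hav : x ≠ e * x := fun h => hx0 (by rw [h, h, ← mul_assoc, he2, zero_mul])
          exact hstar x (e * x) hVa ⟨hex0, 1 - x, hb0, Or.inl hvb⟩ hae hexe hav
            ⟨1, one_pos, Or.inr (by rw [pow_one, hsx, hvb])⟩
    · -- pair (x, star (1-x))
      have hss : star (star ((1 : R) - x)) = 1 - x := star_star _
      have hvv : star ((1 : R) - x) * star x = 0 := by rw [← star_mul, hab, star_zero]
      have hv0 : star ((1 : R) - x) ≠ 0 := fun h => hb0 (by rw [← hss, h, star_zero])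
      have hve : star ((1 : R) - x) ≠ e := fun h => hbe (by rw [← hss, h, hse])
      have hav : x ≠ star ((1 : R) - x) := fun h => hsx (by rw [h, star_star, ← h])
      exact hstar x (star (1 - x)) hVa ⟨hv0, star x, hsa0, Or.inl hvv⟩ hae hve hav
        ⟨1, one_pos, Or.inl (by rw [pow_one, star_star, hab])⟩
  · -- pair (star e, x)
    have hee : star e * star e = 0 := by rw [← star_mul, he2, star_zero]
    have hse0 : star e ≠ 0 := fun h => he0 (by rw [← star_star e, h, star_zero])
    have hsea : star e ≠ x := fun h => hx0 (by rw [← hx, ← h, hee])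
    exact hstar (star e) x ⟨hse0, star e, hse0, Or.inl hee⟩ hVa hse hae hsea
      ⟨2, two_pos, Or.inl (by rw [pow_two, hee, zero_mul])⟩
end

section
/- Let R be a commutative integral domain and let A = R × R be equipped with the exchange involution (x, y)* = (y, x). Then Γ'(A) is disconnected: there is no path in Γ'(A) between any vertex of (R∖{0}) × {0} and any vertex of {0} × (R∖{0}). -/
/-!
In `R × R` the involution swaps the coordinates, so for `a = (a₁, 0)` with `a₁ ≠ 0` the two
adjacency conditions read `a₁ⁿ b₂ = 0` and `b₂ⁿ a₁ = 0`. In a domain either forces `b₂ = 0`: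
the vertices with vanishing second coordinate are closed under adjacency, hence under
reachability, and `{0} × (R∖{0})` lies outside them.
-/

/-- The nonzero zero-divisors of `R × R`. -/
def ZstarProd (R : Type*) [CommRing R] : Set (R × R) :=
  {a | a ≠ 0 ∧ ∃ b : R × R, b ≠ 0 ∧ (a * b = 0 ∨ b * a = 0)}

/-- The generalized zero-divisor graph Γ'(R × R), with the exchange involution
`(x, y)* = (y, x)`. -/
def gammaPProd (R : Type*) [CommRing R] : SimpleGraph (ZstarProd R) where
  Adj a b := a ≠ b ∧ ∃ n : ℕ, 0 < n ∧
      ((a : R × R) ^ n * (b : R × R).swap = 0 ∨ (b : R × R) ^ n * (a : R × R).swap = 0)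
  symm := by
    refine ⟨?_⟩
    rintro a b ⟨hne, n, hn, h⟩
    exact ⟨hne.symm, n, hn, h.symm⟩
  loopless := by refine ⟨?_⟩; rintro a ⟨hne, -⟩; exact hne rfl

lemma SimpleGraph.Reachable.of_adj_closed {V : Type*} {G : SimpleGraph V} {p : V → Prop}
    (hp : ∀ ⦃u v⦄, G.Adj u v → p u → p v) {u v : V} (huv : G.Reachable u v) (hu : p u) :
    p v := by
  obtain ⟨w⟩ := huv
  induction w with
  | nil => exact hu
  | cons hadj _ ih => exact ih (hp hadj hu)

lemma gammaPProd_adj_snd_eq_zero {R : Type*} [CommRing R] [NoZeroDivisors R]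
    {a b : ZstarProd R} (hab : (gammaPProd R).Adj a b) (ha : (a : R × R).2 = 0) :
    (b : R × R).2 = 0 := by
  have ha₁ : (a : R × R).1 ≠ 0 := fun h => a.2.1 (Prod.ext h ha)
  obtain ⟨-, n, -, h | h⟩ := hab
  · have h₁ : (a : R × R).1 ^ n * (b : R × R).2 = 0 := congrArg Prod.fst h
    exact (mul_eq_zero.mp h₁).resolve_left (pow_ne_zero n ha₁)
  · have h₂ : (b : R × R).2 ^ n * (a : R × R).1 = 0 := congrArg Prod.snd h
    exact eq_zero_of_pow_eq_zero ((mul_eq_zero.mp h₂).resolve_right ha₁)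

/-- If `R` is an integral domain, then Γ'(R × R) (with exchange involution) is
disconnected: no vertex of `(R∖{0}) × {0}` is reachable from a vertex of `{0} × (R∖{0})`. -/
theorem stmt_18 {R : Type*} [CommRing R] [IsDomain R]
    (x y : ZstarProd R)
    (hx : (x : R × R).1 ≠ 0 ∧ (x : R × R).2 = 0)
    (hy : (y : R × R).1 = 0 ∧ (y : R × R).2 ≠ 0) :
    ¬ (gammaPProd R).Reachable x y := fun hxy =>
  hy.2 (hxy.of_adj_closed (fun _ _ => gammaPProd_adj_snd_eq_zero) hx.2)
end
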